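/- arXiv:1001.3184 — 4 statements merged into one kernel-verified Lean document; each statement's English description precedes it below -/
import Mathlib

section
/- Let G be a finite group, i an involution in G, and g ∈ G such that the product i·i^g has odd order m. Then the element h = (i·i^g)^((m+1)/2) · g⁻¹ centralizes i. -/
/-!
Write `t = i * i^g`. As a product of two involutions, `t` is inverted by `i`, and so is every
power of `t`. Since `m` is odd, `s = t^((m+1)/2)` is a square root of `t`, so `i^g = i * s²` and
`(s * g⁻¹) * i * (s * g⁻¹)⁻¹ = s * i^g * s⁻¹ = s * i * s = i * s⁻¹ * s = i`.
-/

section Involution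

variable {G : Type*} [Group G]

theorem semiconjBy_mul_inv_of_sq_eq_one {a b : G} (ha : a ^ 2 = 1) (hb : b ^ 2 = 1) :
    SemiconjBy a (a * b) (a * b)⁻¹ := by
  rw [sq] at ha hb
  show a * (a * b) = (a * b)⁻¹ * a
  rw [← mul_assoc, ha, one_mul, mul_inv_rev, inv_mul_cancel_right, inv_eq_of_mul_eq_one_right hb]

theorem conj_inv_sq_eq_one {a : G} (ha : a ^ 2 = 1) (g : G) : (g⁻¹ * a * g) ^ 2 = 1 := by
  simpa [ha] using conj_pow (a := g⁻¹) (b := a) (i := 2)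

theorem pow_half_orderOf_add_one_sq {t : G} (hodd : Odd (orderOf t)) :
    (t ^ ((orderOf t + 1) / 2)) ^ 2 = t := by
  obtain ⟨n, hn⟩ := hodd
  rw [← pow_mul, show (orderOf t + 1) / 2 * 2 = orderOf t + 1 by omega, pow_succ,
    pow_orderOf_eq_one, one_mul]

theorem commute_mul_inv_of_sq_eq_mul_conj {a s g : G} (ha : a ^ 2 = 1)
    (hs : SemiconjBy a s s⁻¹) (hsq : s ^ 2 = a * (g⁻¹ * a * g)) : Commute (s * g⁻¹) a := by
  rw [sq] at ha
  have hconj : g⁻¹ * a * g = a * (s * s) := by rw [← sq, hsq, ← mul_assoc, ha, one_mul]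
  have hsa : s * a = a * s⁻¹ := by simpa using hs.inv_right.eq.symm
  show s * g⁻¹ * a = a * (s * g⁻¹)
  calc s * g⁻¹ * a = s * (g⁻¹ * a * g) * g⁻¹ := by group
    _ = (s * a) * s * s * g⁻¹ := by rw [hconj]; group
    _ = a * (s * g⁻¹) := by rw [hsa]; group

end Involution

theorem stmt_0_general {G : Type*} [Group G] (i g : G)
    (hi2 : i ^ 2 = 1)
    (hodd : Odd (orderOf (i * (g⁻¹ * i * g)))) :
    Commute ((i * (g⁻¹ * i * g)) ^ ((orderOf (i * (g⁻¹ * i * g)) + 1) / 2) * g⁻¹) i := by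
  have hinv := semiconjBy_mul_inv_of_sq_eq_one hi2 (conj_inv_sq_eq_one hi2 g)
  refine commute_mul_inv_of_sq_eq_mul_conj hi2 ?_ (pow_half_orderOf_add_one_sq hodd)
  simpa only [inv_pow] using hinv.pow_right _

/-- If `i` is an involution in a finite group `G` and `i * i^g` has odd order `m`,
then `(i * i^g)^((m+1)/2) * g⁻¹` centralizes `i`. -/
theorem stmt_0 {G : Type*} [Group G] [Finite G] (i g : G)
    (hi2 : i ^ 2 = 1) (hi1 : i ≠ 1)
    (hodd : Odd (orderOf (i * (g⁻¹ * i * g)))) :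
    Commute ((i * (g⁻¹ * i * g)) ^ ((orderOf (i * (g⁻¹ * i * g)) + 1) / 2) * g⁻¹) i :=
  stmt_0_general i g hi2 hodd
end

section
/- Let G be a finite group, i an involution in G, and g ∈ G such that x = i·i^g has even order, and let z be the unique involution in the cyclic group ⟨x⟩. If z = i·c for some central involution c ∈ Z(G) (including c = 1, i.e. z = i), then in fact i·i^g = 1, a contradiction to z ≠ 1; hence z does not lie in the coset i·Z(G). -/
/-!
Put `k = i^g` and `x = i * k`. Since `k` inverts `x`, it centralizes the involution `z = x ^ n`
of `⟨x⟩`. If `z = i * c` with `c` central, then `i = z * c⁻¹` commutes with `k`, so `x ^ 2 = 1`,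
forcing `n = 1` and `z = x`. Then `k = c` is central, hence `i = g * k * g⁻¹ = k` and
`x = i ^ 2 = 1`, contradicting `orderOf x = 2`.
-/

section Dihedral

variable {G : Type*} [Group G]

theorem commute_pow_of_mul_mul_inv_eq_inv {j x : G} {n : ℕ} (hj : j * x * j⁻¹ = x⁻¹)
    (hx : x ^ (2 * n) = 1) : Commute j (x ^ n) := by
  have hinv : (x ^ n)⁻¹ = x ^ n :=
    inv_eq_of_mul_eq_one_right (by rw [← pow_add, ← two_mul, hx])
  rw [commute_iff_eq, ← mul_inv_eq_iff_eq_mul, ← conj_pow, hj, inv_pow, hinv]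

theorem mul_mul_mul_inv_eq_inv {i k : G} (hi : i ^ 2 = 1) (hk : k ^ 2 = 1) :
    k * (i * k) * k⁻¹ = (i * k)⁻¹ := by
  have hi' : i⁻¹ = i := mul_eq_one_iff_inv_eq.mp (by rwa [← pow_two])
  have hk' : k⁻¹ = k := mul_eq_one_iff_inv_eq.mp (by rwa [← pow_two])
  rw [mul_inv_rev, hi', hk', mul_assoc, mul_assoc, ← sq, hk, mul_one]

theorem commute_of_pow_half_orderOf_eq_mul_central {i k c : G} {n : ℕ} (hi : i ^ 2 = 1)
    (hk : k ^ 2 = 1) (hord : orderOf (i * k) = 2 * n) (hc : c ∈ Subgroup.center G)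
    (hz : (i * k) ^ n = i * c) : Commute k i := by
  have hx : (i * k) ^ (2 * n) = 1 := hord ▸ pow_orderOf_eq_one _
  have hkz : Commute k (i * c) :=
    hz ▸ commute_pow_of_mul_mul_inv_eq_inv (mul_mul_mul_inv_eq_inv hi hk) hx
  have hkc : Commute k c := Subgroup.mem_center_iff.mp hc k
  simpa using hkz.mul_right hkc.inv_right

end Dihedral

theorem stmt_2_general {G : Type*} [Group G] (i g : G) (a m : ℕ)
    (hi2 : i ^ 2 = 1) (ha : 1 ≤ a)
    (hord : orderOf (i * (g⁻¹ * i * g)) = 2 ^ a * m) :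
    ¬ ∃ c ∈ Subgroup.center G, (i * (g⁻¹ * i * g)) ^ (2 ^ (a - 1) * m) = i * c := by
  rintro ⟨c, hc, hz⟩
  set k := g⁻¹ * i * g with hk
  set n := 2 ^ (a - 1) * m
  have hk2 : k ^ 2 = 1 := by
    simpa [hi2] using conj_pow (a := g⁻¹) (b := i) (i := 2)
  have hord : orderOf (i * k) = 2 * n := by
    rw [hord, ← mul_assoc, ← pow_succ', Nat.sub_add_cancel ha]
  have hx2 : (i * k) ^ 2 = 1 := by
    rw [(commute_of_pow_half_orderOf_eq_mul_central hi2 hk2 hord hc hz).symm.mul_pow, hi2, hk2,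
      one_mul]
  have hn : n = 1 := by
    have h := orderOf_dvd_of_pow_eq_one hx2
    rw [hord] at h
    exact Nat.dvd_one.mp (Nat.dvd_of_mul_dvd_mul_left two_pos h)
  rw [hn, pow_one] at hz
  have hkc : k = c := mul_left_cancel hz
  have hik : i = k := by
    have hi : i = g * k * g⁻¹ := by rw [hk]; group
    rw [hi, hkc, Subgroup.mem_center_iff.mp hc g, mul_inv_cancel_right]
  have : orderOf (i * k) = 1 := by rw [← hik, ← pow_two, hi2, orderOf_one]
  omega

/-- If `i` is an involution in a finite group `G` and `x = i * i^g` has even order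
`2^a * m` (`m` odd, `a ≥ 1`), then the involution `z = x^(2^(a-1)*m)` in `⟨x⟩`
does not lie in the coset `i * Z(G)`. -/
theorem stmt_2 {G : Type*} [Group G] [Finite G] (i g : G) (a m : ℕ)
    (hi2 : i ^ 2 = 1) (hi1 : i ≠ 1) (hm : Odd m) (ha : 1 ≤ a)
    (hord : orderOf (i * (g⁻¹ * i * g)) = 2 ^ a * m) :
    ¬ ∃ c ∈ Subgroup.center G, (i * (g⁻¹ * i * g)) ^ (2 ^ (a - 1) * m) = i * c :=
  stmt_2_general i g a m hi2 ha hord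
end

section
/- Let K = SL₂(q), q odd, and let j ∈ K be an element of order 4 with j² = −I (a pseudo-involution). If g ∈ K is such that j·j^g has odd order m, then h = (j·j^g)^((m+1)/2) satisfies j^h = j²·j^g, and hence j^(h·g⁻¹) = j³; in particular h·g⁻¹ normalizes the cyclic group ⟨j⟩. -/
/-!
If `a⁴ = 1` and `b² = a²`, conjugation by `a` inverts `x = a b`. When `x` has odd order `m`,
`h = x^((m+1)/2)` is a square root of `x` in `⟨x⟩`, so `h⁻¹ a h = h⁻² a = x⁻¹ a = a x = a² b`.
For `a = j`, `b = j^g` this is `j^h = j² j^g`, and conjugating back by `g⁻¹` gives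
`j^(h g⁻¹) = j² j = j³` because `j²` is central.
-/

instance : Fact (Even (Fintype.card (Fin 2))) := ⟨by decide⟩

section PseudoInvolution

variable {G : Type*} [Group G]

theorem pow_two_mul_half_succ_orderOf {x : G} (hx : Odd (orderOf x)) :
    x ^ (2 * ((orderOf x + 1) / 2)) = x := by
  rw [Nat.two_mul_div_two_of_even hx.add_one, pow_succ, pow_orderOf_eq_one, one_mul]

theorem inv_pow_mul_mul_pow_of_semiconjBy_inv {a x : G} {k : ℕ} (ha : SemiconjBy a x x⁻¹)
    (hk : x ^ (2 * k) = x) : (x ^ k)⁻¹ * a * x ^ k = a * x := by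
  have hak : a * x ^ k = (x ^ k)⁻¹ * a := by
    rw [← inv_pow]
    exact ha.pow_right k
  calc (x ^ k)⁻¹ * a * x ^ k = (x ^ (2 * k))⁻¹ * a := by
        rw [mul_assoc, hak, ← mul_assoc, ← mul_inv_rev, ← pow_add, two_mul]
    _ = a * x := by rw [hk, ha.eq]

theorem semiconjBy_mul_inv_of_sq_mul_sq_eq_one {a b : G} (h : a ^ 2 * b ^ 2 = 1) :
    SemiconjBy a (a * b) (a * b)⁻¹ := by
  have hb : a ^ 2 * b = b⁻¹ := by
    rw [eq_inv_iff_mul_eq_one, mul_assoc, ← sq, h]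
  rw [SemiconjBy, mul_inv_rev, mul_assoc, inv_mul_cancel, mul_one, ← mul_assoc, ← sq, hb]

theorem inv_pow_mul_mul_pow_eq_sq_mul {a b : G} {k : ℕ} (h4 : a ^ 4 = 1) (hb : b ^ 2 = a ^ 2)
    (hk : (a * b) ^ (2 * k) = a * b) : ((a * b) ^ k)⁻¹ * a * (a * b) ^ k = a ^ 2 * b := by
  have hab : a ^ 2 * b ^ 2 = 1 := by rw [hb, ← pow_add, h4]
  rw [inv_pow_mul_mul_pow_of_semiconjBy_inv (semiconjBy_mul_inv_of_sq_mul_sq_eq_one hab) hk,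
    ← mul_assoc, ← sq]

theorem conj_sq_eq_of_sq_mem_center {j : G} (hz : j ^ 2 ∈ Subgroup.center G) (g : G) :
    (g⁻¹ * j * g) ^ 2 = j ^ 2 := by
  simpa [Subgroup.mem_center_iff.mp hz g⁻¹] using conj_pow (a := g⁻¹) (b := j) (i := 2)

theorem conj_mul_inv_eq_pow_three {j g h : G} (hz : j ^ 2 ∈ Subgroup.center G)
    (hh : h⁻¹ * j * h = j ^ 2 * (g⁻¹ * j * g)) :
    (h * g⁻¹)⁻¹ * j * (h * g⁻¹) = j ^ 3 := by
  calc (h * g⁻¹)⁻¹ * j * (h * g⁻¹) = g * (j ^ 2 * (g⁻¹ * j * g)) * g⁻¹ := by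
        rw [← hh]; group
    _ = j ^ 2 * j := by rw [← mul_assoc, Subgroup.mem_center_iff.mp hz g]; group
    _ = j ^ 3 := (pow_succ j 2).symm

end PseudoInvolution

theorem stmt_8_general {F : Type*} [Field F]
    (j g : Matrix.SpecialLinearGroup (Fin 2) F)
    (hj4 : orderOf j = 4) (hj2 : j ^ 2 = -1)
    (hoddord : Odd (orderOf (j * (g⁻¹ * j * g)))) :
    ((j * (g⁻¹ * j * g)) ^ ((orderOf (j * (g⁻¹ * j * g)) + 1) / 2))⁻¹ * j *
        ((j * (g⁻¹ * j * g)) ^ ((orderOf (j * (g⁻¹ * j * g)) + 1) / 2)) =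
      j ^ 2 * (g⁻¹ * j * g) ∧
    (((j * (g⁻¹ * j * g)) ^ ((orderOf (j * (g⁻¹ * j * g)) + 1) / 2)) * g⁻¹)⁻¹ * j *
        (((j * (g⁻¹ * j * g)) ^ ((orderOf (j * (g⁻¹ * j * g)) + 1) / 2)) * g⁻¹) =
      j ^ 3 := by
  have hz : j ^ 2 ∈ Subgroup.center _ :=
    Subgroup.mem_center_iff.mpr fun y => by rw [hj2, mul_neg_one, neg_one_mul]
  have hconj := inv_pow_mul_mul_pow_eq_sq_mul (hj4 ▸ pow_orderOf_eq_one j)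
    (conj_sq_eq_of_sq_mem_center hz g) (pow_two_mul_half_succ_orderOf hoddord)
  exact ⟨hconj, conj_mul_inv_eq_pow_three hz hconj⟩

/-- In `SL₂(q)`, `q` odd, for a pseudo-involution `j` (order 4, `j² = -I`) and `g` with
`j·j^g` of odd order `m`, the element `h = (j·j^g)^((m+1)/2)` satisfies `j^h = j²·j^g`
and `j^(h·g⁻¹) = j³`. -/
theorem stmt_8 {F : Type*} [Field F] [Fintype F] (hodd : Odd (Fintype.card F))
    (j g : Matrix.SpecialLinearGroup (Fin 2) F)
    (hj4 : orderOf j = 4) (hj2 : j ^ 2 = -1)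
    (hoddord : Odd (orderOf (j * (g⁻¹ * j * g)))) :
    ((j * (g⁻¹ * j * g)) ^ ((orderOf (j * (g⁻¹ * j * g)) + 1) / 2))⁻¹ * j *
        ((j * (g⁻¹ * j * g)) ^ ((orderOf (j * (g⁻¹ * j * g)) + 1) / 2)) =
      j ^ 2 * (g⁻¹ * j * g) ∧
    (((j * (g⁻¹ * j * g)) ^ ((orderOf (j * (g⁻¹ * j * g)) + 1) / 2)) * g⁻¹)⁻¹ * j *
        (((j * (g⁻¹ * j * g)) ^ ((orderOf (j * (g⁻¹ * j * g)) + 1) / 2)) * g⁻¹) =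
      j ^ 3 :=
  stmt_8_general j g hj4 hj2 hoddord
end

section
/- Let G be a finite group, j ∈ G with j⁴ = 1 and j² ∈ Z(G), and let g ∈ G be such that j·j^g has odd order m. Then the element ζ₁(g) = (j·j^g)^((m+1)/2)·g⁻¹ conjugates j to j⁻¹ = j³; in particular ζ₁(g) normalizes ⟨j⟩, and the subgroup generated by all such elements ζ₁(g) is contained in N_G(⟨j⟩). -/
/-! Since `j²` is central and `j³ = j⁻¹`, conjugation by `j` inverts `t = j·j^g`. When `t` has
odd order `m`, `s = t^((m+1)/2)` is a square root of `t` lying in `⟨t⟩`, so `j` inverts `s` too and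
`s⁻¹ j s = s⁻² j = t⁻¹ j = (j⁻¹)^g`. Conjugating back by `g⁻¹` turns this into `j⁻¹`. -/

theorem Subgroup.mem_normalizer_zpowers_of_conj_eq_inv {G : Type*} [Group G] {g x : G}
    (h : g * x * g⁻¹ = x⁻¹) : g ∈ Subgroup.normalizer (Subgroup.zpowers x : Set G) := by
  rw [Subgroup.mem_normalizer_iff_map_conj_eq, MonoidHom.map_zpowers, MonoidHom.coe_coe,
    MulAut.conj_apply, h, Subgroup.zpowers_inv]

theorem pow_half_succ_mul_self_of_odd_orderOf {M : Type*} [Monoid M] {t : M}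
    (ht : Odd (orderOf t)) : t ^ ((orderOf t + 1) / 2) * t ^ ((orderOf t + 1) / 2) = t := by
  have : (orderOf t + 1) / 2 + (orderOf t + 1) / 2 = orderOf t + 1 := by
    obtain ⟨n, hn⟩ := ht
    omega
  rw [← pow_add, this, pow_succ, pow_orderOf_eq_one, one_mul]

section

variable {G : Type*} [Group G]

theorem SemiconjBy.inv_pow_mul_mul_pow_of_pow_mul_self {j t : G} {k : ℕ}
    (hj : SemiconjBy j t t⁻¹) (hk : t ^ k * t ^ k = t) : (t ^ k)⁻¹ * j * t ^ k = t⁻¹ * j := by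
  have hjk : j * t ^ k = (t ^ k)⁻¹ * j := by rw [← inv_pow]; exact hj.pow_right k
  rw [mul_assoc, hjk, ← mul_assoc, ← mul_inv_rev, hk]

theorem semiconjBy_mul_conj_inv {j : G} (hj4 : j ^ 4 = 1) (hj2 : j ^ 2 ∈ Subgroup.center G)
    (g : G) : SemiconjBy j (j * (g⁻¹ * j * g)) (j * (g⁻¹ * j * g))⁻¹ := by
  have hj3 : j ^ 3 = j⁻¹ := eq_inv_of_mul_eq_one_left (by rw [← pow_succ, hj4])
  calc j * (j * (g⁻¹ * j * g)) = j ^ 2 * g⁻¹ * (j * g) := by rw [pow_two]; group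
    _ = g⁻¹ * j ^ 3 * g := by rw [← Subgroup.mem_center_iff.mp hj2 g⁻¹]; group
    _ = (j * (g⁻¹ * j * g))⁻¹ * j := by rw [hj3]; group

noncomputable def zeta₁ (j g : G) : G :=
  (j * (g⁻¹ * j * g)) ^ ((orderOf (j * (g⁻¹ * j * g)) + 1) / 2) * g⁻¹

theorem zeta₁_inv_mul_mul_self {j : G} (hj4 : j ^ 4 = 1) (hj2 : j ^ 2 ∈ Subgroup.center G)
    {g : G} (hodd : Odd (orderOf (j * (g⁻¹ * j * g)))) : (zeta₁ j g)⁻¹ * j * zeta₁ j g = j⁻¹ := by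
  set t := j * (g⁻¹ * j * g)
  set s := t ^ ((orderOf t + 1) / 2)
  have hs : s⁻¹ * j * s = t⁻¹ * j :=
    (semiconjBy_mul_conj_inv hj4 hj2 g).inv_pow_mul_mul_pow_of_pow_mul_self
      (pow_half_succ_mul_self_of_odd_orderOf hodd)
  calc (zeta₁ j g)⁻¹ * j * zeta₁ j g = g * (s⁻¹ * j * s) * g⁻¹ := by
        rw [show zeta₁ j g = s * g⁻¹ from rfl]; group
    _ = j⁻¹ := by rw [hs]; simp only [t]; group

theorem zeta₁_mem_normalizer {j : G} (hj4 : j ^ 4 = 1) (hj2 : j ^ 2 ∈ Subgroup.center G)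
    {g : G} (hodd : Odd (orderOf (j * (g⁻¹ * j * g)))) :
    zeta₁ j g ∈ Subgroup.normalizer (Subgroup.zpowers j : Set G) := by
  rw [← inv_mem_iff]
  apply Subgroup.mem_normalizer_zpowers_of_conj_eq_inv
  rw [inv_inv, zeta₁_inv_mul_mul_self hj4 hj2 hodd]

end

theorem stmt_9_general {G : Type*} [Group G] (j : G)
    (hj4 : j ^ 4 = 1) (hj2 : j ^ 2 ∈ Subgroup.center G) :
    (∀ g : G, Odd (orderOf (j * (g⁻¹ * j * g))) →
      ((j * (g⁻¹ * j * g)) ^ ((orderOf (j * (g⁻¹ * j * g)) + 1) / 2) * g⁻¹)⁻¹ * j *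
          ((j * (g⁻¹ * j * g)) ^ ((orderOf (j * (g⁻¹ * j * g)) + 1) / 2) * g⁻¹) = j⁻¹ ∧
      ((j * (g⁻¹ * j * g)) ^ ((orderOf (j * (g⁻¹ * j * g)) + 1) / 2) * g⁻¹) ∈
        Subgroup.normalizer (Subgroup.zpowers j : Set G)) ∧
    Subgroup.closure {x : G | ∃ g : G, Odd (orderOf (j * (g⁻¹ * j * g))) ∧
        x = (j * (g⁻¹ * j * g)) ^ ((orderOf (j * (g⁻¹ * j * g)) + 1) / 2) * g⁻¹} ≤
      Subgroup.normalizer (Subgroup.zpowers j : Set G) := by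
  refine ⟨fun g hodd =>
    ⟨zeta₁_inv_mul_mul_self hj4 hj2 hodd, zeta₁_mem_normalizer hj4 hj2 hodd⟩, ?_⟩
  rw [Subgroup.closure_le]
  rintro _ ⟨g, hodd, rfl⟩
  exact zeta₁_mem_normalizer hj4 hj2 hodd

/-- Let `j` be a pseudo-involution in a finite group `G` (`j⁴ = 1`, `j²` central).
If `j·j^g` has odd order `m`, then `ζ₁(g) = (j·j^g)^((m+1)/2)·g⁻¹` conjugates `j` to
`j⁻¹`, hence normalizes `⟨j⟩`; and the subgroup generated by all such elements lies in
`N_G(⟨j⟩)`. -/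
theorem stmt_9 {G : Type*} [Group G] [Finite G] (j : G)
    (hj4 : j ^ 4 = 1) (hj2 : j ^ 2 ∈ Subgroup.center G) :
    (∀ g : G, Odd (orderOf (j * (g⁻¹ * j * g))) →
      ((j * (g⁻¹ * j * g)) ^ ((orderOf (j * (g⁻¹ * j * g)) + 1) / 2) * g⁻¹)⁻¹ * j *
          ((j * (g⁻¹ * j * g)) ^ ((orderOf (j * (g⁻¹ * j * g)) + 1) / 2) * g⁻¹) = j⁻¹ ∧
      ((j * (g⁻¹ * j * g)) ^ ((orderOf (j * (g⁻¹ * j * g)) + 1) / 2) * g⁻¹) ∈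
        Subgroup.normalizer (Subgroup.zpowers j : Set G)) ∧
    Subgroup.closure {x : G | ∃ g : G, Odd (orderOf (j * (g⁻¹ * j * g))) ∧
        x = (j * (g⁻¹ * j * g)) ^ ((orderOf (j * (g⁻¹ * j * g)) + 1) / 2) * g⁻¹} ≤
      Subgroup.normalizer (Subgroup.zpowers j : Set G) :=
  stmt_9_general j hj4 hj2
end
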